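/- The two-state Floyd automaton with states {q₀, q₁}, initial and final state q₀, push transitions q₀ →^{a} q₁, q₀ →^{b} q₁, q₁ →^{c} q₁ for all c ∈ {a, ā, b, b̄}, and flush transitions q₁ ⇒^{q₁} q₁, q₁ ⇒^{q₀} q₀, under the precedence matrix with a ≐ ā, b ≐ b̄, opening symbols a,b yielding precedence (⋖) to a and b, closing symbols ā, b̄ taking precedence (⋗) over ā, b̄, #, and yielding to a, b, and # ⋖ a, # ⋖ b, accepts exactly the Dyck language over the two parenthesis pairs (a, ā) and (b, b̄). -/

import Mathlib

/-! # Preliminaries: precedence relations, Floyd automata, chains, supports,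
operator (Floyd) grammars. -/

/-- The three operator precedence relations. -/
inductive PrecRel : Type
  | lt  -- ⋖ , yields precedence
  | eq  -- ≐ , equal in precedence
  | gt  -- ⋗ , takes precedence
deriving DecidableEq

/-- A (nondeterministic) Floyd automaton over a precedence alphabet `(T, M)`.
`none` plays the role of the delimiter `#`. -/
structure FloydAutomaton (T : Type*) (Q : Type*) where
  /-- conflict-free operator precedence matrix over `T ∪ {#}` -/
  M : Option T → Option T → Option PrecRel
  /-- initial states -/
  init : Set Q
  /-- final states -/
  final : Set Q
  /-- push transition function -/
  push : Q → T → Set Q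
  /-- flush transition function -/
  flush : Q → Q → Set Q

namespace FloydAutomaton

/-- A configuration: the bottom stack symbol `(#, base)` is represented by `base`,
the rest of the stack is a list (top = head) of triples (marked?, symbol, state),
and `input` is the remaining input (the trailing `#` is implicit). -/
structure Config (T : Type*) (Q : Type*) where
  base : Q
  stack : List (Bool × T × Q)
  input : List T

variable {T Q : Type*}

/-- Symbol on top of the stack (`none` = `#`). -/
def Config.topSym (c : Config T Q) : Option T := c.stack.head?.map (fun s => s.2.1)

/-- State on top of the stack. -/
def Config.topState (c : Config T Q) : Q := ((c.stack.head?.map (fun s => s.2.2)).getD c.base)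

/-- Number of marked symbols on the stack. -/
def Config.marked (c : Config T Q) : ℕ := c.stack.countP (fun s => s.1)

variable (A : FloydAutomaton T Q)

/-- One move of a Floyd automaton: push (top ≐ current), mark (top ⋖ current),
flush (top ⋗ current). -/
inductive Step : Config T Q → Config T Q → Prop
  | push {b : Q} {st : List (Bool × T × Q)} {w : List T} {q : Q} (a : T) :
      A.M (Config.topSym ⟨b, st, a :: w⟩) (some a) = some PrecRel.eq →
      q ∈ A.push (Config.topState ⟨b, st, a :: w⟩) a →
      Step ⟨b, st, a :: w⟩ ⟨b, (false, a, q) :: st, w⟩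
  | mark {b : Q} {st : List (Bool × T × Q)} {w : List T} {q : Q} (a : T) :
      A.M (Config.topSym ⟨b, st, a :: w⟩) (some a) = some PrecRel.lt →
      q ∈ A.push (Config.topState ⟨b, st, a :: w⟩) a →
      Step ⟨b, st, a :: w⟩ ⟨b, (true, a, q) :: st, w⟩
  | flushMid {b : Q} {pre : List (Bool × T × Q)} {x : T} {qm : Q}
      {s : Bool × T × Q} {rest : List (Bool × T × Q)} {w : List T} {q : Q} :
      (∀ p ∈ pre, p.1 = false) →
      A.M (Config.topSym ⟨b, pre ++ (true, x, qm) :: s :: rest, w⟩) w.head? = some PrecRel.gt →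
      q ∈ A.flush (Config.topState ⟨b, pre ++ (true, x, qm) :: s :: rest, w⟩) s.2.2 →
      Step ⟨b, pre ++ (true, x, qm) :: s :: rest, w⟩ ⟨b, (s.1, s.2.1, q) :: rest, w⟩
  | flushBot {b : Q} {pre : List (Bool × T × Q)} {x : T} {qm : Q} {w : List T} {q : Q} :
      (∀ p ∈ pre, p.1 = false) →
      A.M (Config.topSym ⟨b, pre ++ [(true, x, qm)], w⟩) w.head? = some PrecRel.gt →
      q ∈ A.flush (Config.topState ⟨b, pre ++ [(true, x, qm)], w⟩) b →
      Step ⟨b, pre ++ [(true, x, qm)], w⟩ ⟨q, [], w⟩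

/-- Acceptance of a finite word. -/
def Accepts (x : List T) : Prop :=
  ∃ qI ∈ A.init, ∃ qF ∈ A.final,
    Relation.ReflTransGen A.Step ⟨qI, [], x⟩ ⟨qF, [], []⟩

/-- The language recognized by a Floyd automaton. -/
def language : Set (List T) := { x | A.Accepts x }

/-- A Floyd automaton is deterministic iff it has one initial state and all
transition functions yield at most one state. -/
def Deterministic : Prop :=
  (∃ q, A.init = {q}) ∧ (∀ q a, (A.push q a).Subsingleton) ∧
    (∀ q p, (A.flush q p).Subsingleton)

/-- States of the powerset determinization: a lookback symbol together with a set
of pairs of states (`none` in the second component is `⊥`). -/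
abbrev DetState (T : Type*) (Q : Type*) := Option T × Set (Q × Option Q)

/-- Push transition of the determinization. -/
def detPushF (s : DetState T Q) (a : T) : DetState T Q :=
  (some a, { ht | ∃ q p, (q, p) ∈ s.2 ∧ ht.1 ∈ A.push q a ∧
      ((A.M s.1 (some a) = some PrecRel.lt ∧ ht.2 = some q) ∨
       (A.M s.1 (some a) = some PrecRel.eq ∧ ht.2 = p)) })

/-- Flush transition of the determinization. -/
def detFlushF (s₁ s₂ : DetState T Q) : DetState T Q :=
  (s₂.1, { hp | ∃ r q, (r, some q) ∈ s₁.2 ∧ (q, hp.2) ∈ s₂.2 ∧ hp.1 ∈ A.flush r q })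

/-- The powerset determinization of a Floyd automaton. -/
def det : FloydAutomaton T (DetState T Q) where
  M := A.M
  init := {(none, { p | p.2 = none ∧ p.1 ∈ A.init })}
  final := { s | s.1 = none ∧ ∃ q ∈ A.final, (q, none) ∈ s.2 }
  push := fun s a => {A.detPushF s a}
  flush := fun s₁ s₂ => {A.detFlushF s₁ s₂}

end FloydAutomaton

section Chains

variable {T : Type*}

mutual
/-- `ChainB M a₀ y b` : the word `y` is the body of a (simple or composed) chain
`⌈a₀⌉ y ⌊b⌋` over the precedence alphabet `(T, M)`. -/
inductive ChainB (M : Option T → Option T → Option PrecRel) :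
    Option T → List T → Option T → Prop
  | head0 {a₀ b : Option T} {a₁ : T} {y : List T} :
      M a₀ b ≠ none →
      M a₀ (some a₁) = some PrecRel.lt →
      ChainT M a₁ y b →
      ChainB M a₀ (a₁ :: y) b
  | head {a₀ b : Option T} {a₁ : T} {x₀ y : List T} :
      M a₀ b ≠ none →
      M a₀ (some a₁) = some PrecRel.lt →
      ChainB M a₀ x₀ (some a₁) →
      ChainT M a₁ y b →
      ChainB M a₀ (x₀ ++ a₁ :: y) b

/-- Auxiliary: tail of a chain body, after a skeleton symbol `a`. -/
inductive ChainT (M : Option T → Option T → Option PrecRel) :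
    T → List T → Option T → Prop
  | last0 {a : T} {b : Option T} :
      M (some a) b = some PrecRel.gt →
      ChainT M a [] b
  | last {a : T} {xn : List T} {b : Option T} :
      ChainB M (some a) xn b →
      M (some a) b = some PrecRel.gt →
      ChainT M a xn b
  | cons0 {a a' : T} {y : List T} {b : Option T} :
      M (some a) (some a') = some PrecRel.eq →
      ChainT M a' y b →
      ChainT M a (a' :: y) b
  | cons {a a' : T} {x y : List T} {b : Option T} :
      M (some a) (some a') = some PrecRel.eq →
      ChainB M (some a) x (some a') →
      ChainT M a' y b →
      ChainT M a (x ++ a' :: y) b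
end

/-- `SimpleBody M a₀ l b` : `l` is the body `a₁ … aₙ` of a simple chain
`⌈a₀⌉ a₁ … aₙ ⌊b⌋`, i.e. `a₀ ⋖ a₁ ≐ … ≐ aₙ ⋗ b` with `M a₀ b` defined. -/
def SimpleBody (M : Option T → Option T → Option PrecRel)
    (a₀ : Option T) (l : List T) (b : Option T) : Prop :=
  (l ≠ []) ∧ M a₀ b ≠ none ∧
  (∀ h : l ≠ [], M a₀ (some (l.head h)) = some PrecRel.lt ∧
      M (some (l.getLast h)) b = some PrecRel.gt) ∧
  List.Chain' (fun x y => M (some x) (some y) = some PrecRel.eq) l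

/-- `≐`-acyclicity of a precedence matrix. -/
def EqAcyclic (M : Option T → Option T → Option PrecRel) : Prop :=
  ∀ x : Option T, ¬ Relation.TransGen (fun u v => M u v = some PrecRel.eq) x x

variable {Q : Type*}

mutual
/-- `Supp A q y q'` : the automaton `A` has a support labelled by the chain body `y`
leading from state `q` to state `q'`, ending with a flush labelled by the state
reached after the first filler. -/
inductive Supp (A : FloydAutomaton T Q) : Q → List T → Q → Prop
  | head0 {q₀ q₁ qf : Q} {a₁ : T} {y : List T} :
      q₁ ∈ A.push q₀ a₁ →
      SuppT A q₀ q₁ y qf →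
      Supp A q₀ (a₁ :: y) qf
  | head {q₀ q₀' q₁ qf : Q} {a₁ : T} {x₀ y : List T} :
      Supp A q₀ x₀ q₀' →
      q₁ ∈ A.push q₀' a₁ →
      SuppT A q₀' q₁ y qf →
      Supp A q₀ (x₀ ++ a₁ :: y) qf

/-- Auxiliary: the tail of a support; the first argument after `A` is the label
of the final flush. -/
inductive SuppT (A : FloydAutomaton T Q) : Q → Q → List T → Q → Prop
  | last0 {q₀' qn qf : Q} :
      qf ∈ A.flush qn q₀' →
      SuppT A q₀' qn [] qf
  | last {q₀' qn q' qf : Q} {xn : List T} :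
      Supp A qn xn q' →
      qf ∈ A.flush q' q₀' →
      SuppT A q₀' qn xn qf
  | cons0 {q₀' qi q'' qf : Q} {a : T} {y : List T} :
      q'' ∈ A.push qi a →
      SuppT A q₀' q'' y qf →
      SuppT A q₀' qi (a :: y) qf
  | cons {q₀' qi q' q'' qf : Q} {a : T} {x y : List T} :
      Supp A qi x q' →
      q'' ∈ A.push q' a →
      SuppT A q₀' q'' y qf →
      SuppT A q₀' qi (x ++ a :: y) qf
end

end Chains

section Grammar

variable {T : Type*}

open Symbol in
/-- A symbol is a nonterminal. -/
def IsNT {N : Type*} : Symbol T N → Prop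
  | Symbol.nonterminal _ => True
  | Symbol.terminal _ => False

/-- A string over `Σ ∪ N` has no two adjacent nonterminals. -/
def NoAdjNT {N : Type*} (l : List (Symbol T N)) : Prop :=
  List.Chain' (fun x y => ¬(IsNT x ∧ IsNT y)) l

/-- An operator grammar: no right-hand side contains two adjacent nonterminals. -/
def OperatorGrammar (g : ContextFreeGrammar T) : Prop :=
  ∀ r ∈ g.rules, NoAdjNT r.output

/-- The equal-in-precedence relation `a ≐ b` of a grammar. -/
def GEq (g : ContextFreeGrammar T) (a b : T) : Prop :=
  ∃ r ∈ g.rules, ∃ α mid β,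
    r.output = α ++ Symbol.terminal a :: (mid ++ Symbol.terminal b :: β) ∧
    (mid = [] ∨ ∃ B, mid = [Symbol.nonterminal B])

/-- The left terminal set: `a ∈ 𝓛(A)` iff `A ⇒* B a α` with `B ∈ N ∪ {ε}`. -/
def LTerm (g : ContextFreeGrammar T) (A : g.NT) (a : T) : Prop :=
  ∃ pre α, g.Derives [Symbol.nonterminal A] (pre ++ Symbol.terminal a :: α) ∧
    (pre = [] ∨ ∃ B, pre = [Symbol.nonterminal B])

/-- The right terminal set: `a ∈ 𝓡(A)` iff `A ⇒* α a B` with `B ∈ N ∪ {ε}`. -/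
def RTerm (g : ContextFreeGrammar T) (A : g.NT) (a : T) : Prop :=
  ∃ α post, g.Derives [Symbol.nonterminal A] (α ++ Symbol.terminal a :: post) ∧
    (post = [] ∨ ∃ B, post = [Symbol.nonterminal B])

/-- The yields-precedence relation `a ⋖ b` of a grammar. -/
def GLt (g : ContextFreeGrammar T) (a b : T) : Prop :=
  ∃ r ∈ g.rules, ∃ α β D,
    r.output = α ++ Symbol.terminal a :: Symbol.nonterminal D :: β ∧ LTerm g D b

/-- The takes-precedence relation `a ⋗ b` of a grammar. -/
def GGt (g : ContextFreeGrammar T) (a b : T) : Prop :=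
  ∃ r ∈ g.rules, ∃ α β D,
    r.output = α ++ Symbol.nonterminal D :: Symbol.terminal b :: β ∧ RTerm g D a

/-- Conflict-freeness: for each pair of terminals at most one precedence relation holds. -/
def ConflictFree (g : ContextFreeGrammar T) : Prop :=
  ∀ a b : T, ¬(GEq g a b ∧ GLt g a b) ∧ ¬(GEq g a b ∧ GGt g a b) ∧
    ¬(GLt g a b ∧ GGt g a b)

/-- A Floyd (operator precedence) grammar. -/
def FloydGrammar (g : ContextFreeGrammar T) : Prop :=
  OperatorGrammar g ∧ ConflictFree g

end Grammar


/-- The four parenthesis symbols. -/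
inductive Dk : Type | a | abar | b | bbar
deriving DecidableEq

/-- The precedence matrix of Figure 2: `a ≐ ā`, `b ≐ b̄`, opening symbols yield
to `a, b`, closing symbols take precedence over `ā, b̄, #` and yield to `a, b`,
and `# ⋖ a`, `# ⋖ b`. -/
def Mdyck : Option Dk → Option Dk → Option PrecRel
  | some Dk.a, some Dk.a => some PrecRel.lt
  | some Dk.a, some Dk.b => some PrecRel.lt
  | some Dk.a, some Dk.abar => some PrecRel.eq
  | some Dk.b, some Dk.a => some PrecRel.lt
  | some Dk.b, some Dk.b => some PrecRel.lt
  | some Dk.b, some Dk.bbar => some PrecRel.eq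
  | some Dk.abar, some Dk.a => some PrecRel.lt
  | some Dk.abar, some Dk.b => some PrecRel.lt
  | some Dk.abar, some Dk.abar => some PrecRel.gt
  | some Dk.abar, some Dk.bbar => some PrecRel.gt
  | some Dk.abar, none => some PrecRel.gt
  | some Dk.bbar, some Dk.a => some PrecRel.lt
  | some Dk.bbar, some Dk.b => some PrecRel.lt
  | some Dk.bbar, some Dk.abar => some PrecRel.gt
  | some Dk.bbar, some Dk.bbar => some PrecRel.gt
  | some Dk.bbar, none => some PrecRel.gt
  | none, some Dk.a => some PrecRel.lt
  | none, some Dk.b => some PrecRel.lt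
  | _, _ => none

/-- The two-state automaton of Figure 2 (`false` = `q₀`, `true` = `q₁`). -/
def dyckFA : FloydAutomaton Dk Bool where
  M := Mdyck
  init := {false}
  final := {false}
  push := fun q s =>
    match q, s with
    | false, Dk.a => {true}
    | false, Dk.b => {true}
    | true, _ => {true}
    | _, _ => ∅
  flush := fun q p =>
    match q, p with
    | true, true => {true}
    | true, false => {false}
    | _, _ => ∅

/-- The Dyck language over the pairs `(a, ā)` and `(b, b̄)`:
`S → ε | a S ā S | b S b̄ S`. -/
inductive IsDyck : List Dk → Prop
  | nil : IsDyck []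
  | wrapA {x y : List Dk} : IsDyck x → IsDyck y →
      IsDyck (Dk.a :: x ++ Dk.abar :: y)
  | wrapB {x y : List Dk} : IsDyck x → IsDyck y →
      IsDyck (Dk.b :: x ++ Dk.bbar :: y)

/-! The language is decided by the precedence matrix alone. An opening symbol is always marked,
its partner is `≐`-pushed onto it, and the pair is flushed as soon as a closing symbol or `#`
follows; that flush returns the state that was below the pair, so the states never block a run.
Conversely, on an accepting run the stack consists of unmatched marked openers `o₁, o₂, …`
(top first) and matched pairs awaiting their flush, and the remaining input must have the
shape `D · close o₁ · D · close o₂ ⋯ D` with `D` the Dyck language. -/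

namespace Dk

def IsOpen (d : Dk) : Prop := d = a ∨ d = b

/-- The partner of an opening symbol; a closing symbol is its own image. -/
def close : Dk → Dk
  | a => abar
  | b => bbar
  | d => d

theorem not_isOpen_close (d : Dk) : ¬ (close d).IsOpen := by
  cases d <;> simp [close, IsOpen]

theorem mdyck_eq_lt_iff (t : Option Dk) (d : Dk) :
    Mdyck t (some d) = some PrecRel.lt ↔ d.IsOpen := by
  rcases t with _ | t <;> try cases t
  all_goals cases d <;> simp [Mdyck, IsOpen]

theorem mdyck_eq_eq_iff (t : Option Dk) (d : Dk) :
    Mdyck t (some d) = some PrecRel.eq ↔ ∃ o, o.IsOpen ∧ t = some o ∧ d = close o := by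
  rcases t with _ | t <;> try cases t
  all_goals cases d <;> simp [Mdyck, IsOpen, close]

theorem mdyck_close_eq_gt {t : Option Dk} (ht : ∀ d ∈ t, ¬ d.IsOpen) (o : Dk) :
    Mdyck (some (close o)) t = some PrecRel.gt := by
  rcases t with _ | t <;> try cases t
  all_goals cases o <;> simp_all [Mdyck, IsOpen, close]

theorem not_isOpen_of_mdyck_eq_gt {c : Dk} {t : Option Dk}
    (h : Mdyck (some c) t = some PrecRel.gt) : ¬ c.IsOpen := by
  rcases t with _ | t <;> try cases t
  all_goals cases c <;> simp_all [Mdyck, IsOpen]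

end Dk

open Dk

theorem IsDyck.append {u v : List Dk} (hu : IsDyck u) (hv : IsDyck v) : IsDyck (u ++ v) := by
  induction hu with
  | nil => exact hv
  | wrapA _ _ _ ih => simpa using IsDyck.wrapA ‹_› ih
  | wrapB _ _ _ ih => simpa using IsDyck.wrapB ‹_› ih

theorem IsDyck.wrap {o : Dk} (ho : o.IsOpen) {x y : List Dk} (hx : IsDyck x) (hy : IsDyck y) :
    IsDyck (o :: x ++ close o :: y) := by
  rcases ho with rfl | rfl
  exacts [wrapA hx hy, wrapB hx hy]

namespace dyckFA

open FloydAutomaton Relation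

theorem mem_flush {p q r : Bool} (h : r ∈ dyckFA.flush p q) : r = q := by
  cases p <;> cases q <;> simp_all [dyckFA]

theorem true_mem_push_of_isOpen {q : Bool} {d : Dk} (hd : d.IsOpen) : true ∈ dyckFA.push q d := by
  rcases hd with rfl | rfl <;> cases q <;> simp [dyckFA]

def Consumes (x : List Dk) : Prop :=
  ∀ (base : Bool) (st : List (Bool × Dk × Bool)) (w : List Dk),
    (∀ d ∈ w.head?, ¬ d.IsOpen) →
    ReflTransGen dyckFA.Step ⟨base, st, x ++ w⟩ ⟨base, st, w⟩

theorem step_flush_pair {o : Dk} {q base : Bool} {st : List (Bool × Dk × Bool)} {w : List Dk}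
    (hw : ∀ d ∈ w.head?, ¬ d.IsOpen) :
    dyckFA.Step ⟨base, (false, close o, true) :: (true, o, q) :: st, w⟩ ⟨base, st, w⟩ := by
  have hgt := mdyck_close_eq_gt hw o
  cases st with
  | nil =>
    exact Step.flushBot (pre := [_]) (by simp) hgt
      (by cases base <;> simp [dyckFA, Config.topState])
  | cons s rest =>
    obtain ⟨m, d, p⟩ := s
    exact Step.flushMid (pre := [_]) (by simp) hgt (by cases p <;> simp [dyckFA, Config.topState])

theorem Consumes.wrap {o : Dk} (ho : o.IsOpen) {x y : List Dk} (hx : Consumes x)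
    (hy : Consumes y) : Consumes (o :: x ++ close o :: y) := by
  intro base st w hw
  have hmark : dyckFA.Step ⟨base, st, o :: (x ++ close o :: (y ++ w))⟩
      ⟨base, (true, o, true) :: st, x ++ close o :: (y ++ w)⟩ :=
    Step.mark o ((mdyck_eq_lt_iff _ _).2 ho) (true_mem_push_of_isOpen ho)
  have hclose : dyckFA.Step ⟨base, (true, o, true) :: st, close o :: (y ++ w)⟩
      ⟨base, (false, close o, true) :: (true, o, true) :: st, y ++ w⟩ :=
    Step.push (close o) ((mdyck_eq_eq_iff _ _).2 ⟨o, ho, rfl, rfl⟩)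
      (by simp [dyckFA, Config.topState])
  simp only [List.cons_append, List.append_assoc]
  exact .head hmark <| (hx _ _ _ (by simpa using not_isOpen_close o)).trans <| .head hclose <|
    (hy _ _ _ hw).tail (step_flush_pair hw)

theorem consumes_of_isDyck {x : List Dk} (hx : IsDyck x) : Consumes x := by
  induction hx with
  | nil => exact fun _ _ _ _ => .refl
  | wrapA _ _ ihx ihy => exact Consumes.wrap (Or.inl rfl) ihx ihy
  | wrapB _ _ ihx ihy => exact Consumes.wrap (Or.inr rfl) ihx ihy

/-- `Completes os w` says `w ∈ D · close o₁ · D · close o₂ ⋯ D` for `os = [o₁, o₂, …]`,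
with `D` the Dyck language. -/
inductive Completes : List Dk → List Dk → Prop
  | nil {w : List Dk} : IsDyck w → Completes [] w
  | cons {o : Dk} {os u v : List Dk} : IsDyck u → Completes os v →
      Completes (o :: os) (u ++ close o :: v)

theorem completes_nil_iff {w : List Dk} : Completes [] w ↔ IsDyck w :=
  ⟨fun | .nil h => h, .nil⟩

theorem Completes.dyck_append {os w d : List Dk} (hd : IsDyck d) :
    Completes os w → Completes os (d ++ w)
  | .nil hw => .nil (hd.append hw)
  | .cons (u := u) hu hv => by simpa using Completes.cons (hd.append hu) hv

theorem Completes.cons_close {o : Dk} {os w : List Dk} (h : Completes os w) :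
    Completes (o :: os) (close o :: w) :=
  .cons (u := []) .nil h

theorem Completes.of_cons {o : Dk} (ho : o.IsOpen) {os w : List Dk} :
    Completes (o :: os) w → Completes os (o :: w)
  | .cons (u := u) (v := v) hu hv => by
    simpa using hv.dyck_append (IsDyck.wrap ho hu .nil)

/-- The stacks met on accepting runs: marked opening symbols, still unmatched, and
matched pairs `o, close o` awaiting their flush; `os` lists the unmatched ones, top first.
States are ignored. -/
inductive PendingStack : List (Bool × Dk × Bool) → List Dk → Prop
  | nil : PendingStack [] []
  | unmatched {o : Dk} {q : Bool} {st os} : o.IsOpen → PendingStack st os →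
      PendingStack ((true, o, q) :: st) (o :: os)
  | matched {o : Dk} {q q' : Bool} {st os} : o.IsOpen → PendingStack st os →
      PendingStack ((false, close o, q') :: (true, o, q) :: st) os

theorem PendingStack.flush_tail {pre tail : List (Bool × Dk × Bool)} {x : Dk} {qm : Bool}
    {os : List Dk} (h : PendingStack (pre ++ (true, x, qm) :: tail) os)
    (hpre : ∀ p ∈ pre, p.1 = false) (hx : pre = [] → ¬ x.IsOpen) : PendingStack tail os := by
  generalize hst : pre ++ (true, x, qm) :: tail = st at h
  cases h with
  | nil => simp at hst
  | unmatched ho _ =>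
    rcases pre with _ | ⟨e, pre⟩
    · simp only [List.nil_append, List.cons.injEq, Prod.mk.injEq] at hst
      exact absurd (hst.1.2.1 ▸ ho) (hx rfl)
    · simp only [List.cons_append, List.cons.injEq] at hst
      simpa [hst.1] using hpre e List.mem_cons_self
  | matched _ h =>
    rcases pre with _ | ⟨e, _ | ⟨e', pre⟩⟩
    · simp at hst
    · simp only [List.cons_append, List.nil_append, List.cons.injEq, Prod.mk.injEq] at hst
      exact hst.2.2 ▸ h
    · simp only [List.cons_append, List.cons.injEq] at hst
      simpa [hst.2.1] using hpre e' (by simp)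

theorem PendingStack.step {c c' : Config Dk Bool} (h : dyckFA.Step c c') {os : List Dk}
    (hc : PendingStack c.stack os) :
    ∃ os', PendingStack c'.stack os' ∧ (Completes os' c'.input → Completes os c.input) := by
  cases h with
  | push d hM _ =>
    obtain ⟨o, ho, htop, rfl⟩ := (mdyck_eq_eq_iff _ _).1 hM
    cases hc with
    | nil => cases htop
    | unmatched ho' hst =>
      cases htop
      exact ⟨_, .matched ho' hst, Completes.cons_close⟩
    | matched _ _ => exact absurd ho (Option.some.inj htop ▸ not_isOpen_close _)
  | mark d hM _ =>
    have ha := (mdyck_eq_lt_iff _ _).1 hM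
    exact ⟨_, .unmatched ha hc, Completes.of_cons ha⟩
  | flushMid hpre hM hq =>
    have := hc.flush_tail hpre (by rintro rfl; exact not_isOpen_of_mdyck_eq_gt hM)
    rw [mem_flush hq]
    exact ⟨os, this, id⟩
  | flushBot hpre hM _ =>
    have := hc.flush_tail hpre (by rintro rfl; exact not_isOpen_of_mdyck_eq_gt hM)
    cases this
    exact ⟨[], .nil, id⟩

theorem completes_of_reaches {c : Config Dk Bool} {qF : Bool}
    (h : ReflTransGen dyckFA.Step c ⟨qF, [], []⟩) {os : List Dk}
    (hc : PendingStack c.stack os) : Completes os c.input := by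
  induction h using ReflTransGen.head_induction_on generalizing os with
  | refl => cases hc; exact .nil .nil
  | head hstep _ ih =>
    obtain ⟨os', hc', hcompl⟩ := hc.step hstep
    exact hcompl (ih hc')

end dyckFA

/-- the automaton accepts exactly the Dyck language. -/
theorem dyckFA_language : dyckFA.language = { x | IsDyck x } := by
  ext x
  constructor
  · rintro ⟨qI, -, qF, -, run⟩
    exact dyckFA.completes_nil_iff.1 (dyckFA.completes_of_reaches run .nil)
  · intro hx
    have run := dyckFA.consumes_of_isDyck hx false [] [] (by simp)
    exact ⟨false, rfl, false, rfl, by simpa using run⟩
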